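/- arXiv:2104.09913 — 3 statements merged into one kernel-verified Lean document; each statement's English description precedes it below -/
import Mathlib

section
/- Let ℏ > 0, R > 0 and A ∈ (0, π/2). Define F : ℝ → ℝ by F(x) = (ℏ²/R²)·[ (1/2)·cot²(A)·x² − ℏ·csc⁴(A)·sin(2A)·x + ℏ³·csc⁶(A)·sin(2A)/(2(x + ℏ cot A)) + ℏ²·(2 + cos(2A))·csc⁴(A)·ln(ℏ cos A + x sin A) ]. Then for every x > 0, F is differentiable at x with F′(x) = (ℏ²/R²) · x · cot²(A + arctan(ℏ/x)). -/
/-!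
The addition formula turns `cot (A + arctan (ℏ / x))` into the rational function
`(x cos A - ℏ sin A) / (x sin A + ℏ cos A)`, so the claim is the derivative of an explicit
partial-fraction decomposition: differentiate the bracket term by term, clear denominators, and
the difference of the two sides is a multiple of `sin² A + cos² A - 1`.
-/

open Real

/-- Unconditional: when `sin A + y cos A = 0`, then also `sin (A + arctan y) = 0`, and both
sides are `0` by the convention `a / 0 = 0`. -/
theorem cot_add_arctan (A y : ℝ) :
    cot (A + arctan y) = (cos A - y * sin A) / (sin A + y * cos A) := by
  have hsqrt : sqrt (1 + y ^ 2) ≠ 0 := (sqrt_pos.2 (by positivity)).ne'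
  rw [cot_eq_cos_div_sin, cos_add, sin_add, cos_arctan, sin_arctan,
    ← mul_div_mul_right _ _ hsqrt]
  congr 1 <;> field_simp

theorem cot_add_arctan_div (A h : ℝ) {x : ℝ} (hx : x ≠ 0) :
    cot (A + arctan (h / x)) = (x * cos A - h * sin A) / (x * sin A + h * cos A) := by
  rw [cot_add_arctan, ← mul_div_mul_left _ _ hx]
  congr 1 <;> field_simp

/-- The bracket of the antiderivative `F` of Eq. (34), without the factor `ℏ² / R²`. -/
noncomputable def antiderivativeI1Plus (h A x : ℝ) : ℝ :=
  (1 / 2) * (cot A) ^ 2 * x ^ 2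
    - h * (1 / sin A) ^ 4 * sin (2 * A) * x
    + h ^ 3 * (1 / sin A) ^ 6 * sin (2 * A) / (2 * (x + h * cot A))
    + h ^ 2 * (2 + cos (2 * A)) * (1 / sin A) ^ 4 * log (h * cos A + x * sin A)

theorem hasDerivAt_antiderivativeI1Plus {h A x : ℝ} (hs : sin A ≠ 0)
    (hD : h * cos A + x * sin A ≠ 0) :
    HasDerivAt (antiderivativeI1Plus h A)
      (x * ((x * cos A - h * sin A) / (x * sin A + h * cos A)) ^ 2) x := by
  have hshift : x + h * cot A = (cos A * h + sin A * x) / sin A := by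
    rw [cot_eq_cos_div_sin]; field_simp; ring
  have hD' : cos A * h + sin A * x ≠ 0 := by convert hD using 1; ring
  have hquad := ((hasDerivAt_pow 2 x).const_mul ((1 / 2) * (cot A) ^ 2)).sub
    ((hasDerivAt_id' x).const_mul (h * (1 / sin A) ^ 4 * sin (2 * A)))
  have hrecip := (hasDerivAt_const x (h ^ 3 * (1 / sin A) ^ 6 * sin (2 * A))).div
    (((hasDerivAt_id' x).add_const (h * cot A)).const_mul 2)
    (by rw [hshift]; exact mul_ne_zero two_ne_zero (div_ne_zero hD' hs))
  have hlog := ((((hasDerivAt_id' x).mul_const (sin A)).const_add (h * cos A)).log hD).const_mul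
    (h ^ 2 * (2 + cos (2 * A)) * (1 / sin A) ^ 4)
  refine ((hquad.add hrecip).add hlog).congr_deriv ?_
  rw [hshift, cot_eq_cos_div_sin, sin_two_mul, cos_two_mul, add_comm (x * sin A)]
  field_simp
  linear_combination 2 * (2 * cos A * sin A ^ 2 * h * x ^ 2
    - sin A * (1 - cos A ^ 2 + sin A ^ 2) * h ^ 2 * x) * sin_sq_add_cos_sq A

theorem antiderivative_I1_plus_general (h R A : ℝ) (hh : 0 < h)
    (hA : A ∈ Set.Ioo 0 (π / 2)) :
    ∀ x : ℝ, 0 < x →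
      HasDerivAt
        (fun x : ℝ => (h ^ 2 / R ^ 2) *
          ((1 / 2) * (Real.cot A) ^ 2 * x ^ 2
            - h * (1 / Real.sin A) ^ 4 * Real.sin (2 * A) * x
            + h ^ 3 * (1 / Real.sin A) ^ 6 * Real.sin (2 * A) / (2 * (x + h * Real.cot A))
            + h ^ 2 * (2 + Real.cos (2 * A)) * (1 / Real.sin A) ^ 4 *
                Real.log (h * Real.cos A + x * Real.sin A)))
        ((h ^ 2 / R ^ 2) * x * (Real.cot (A + Real.arctan (h / x))) ^ 2) x := by
  intro x hx
  obtain ⟨hA0, hA2⟩ := hA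
  have hs : 0 < sin A := sin_pos_of_pos_of_lt_pi hA0 (by linarith [pi_pos])
  have hc : 0 < cos A := cos_pos_of_mem_Ioo ⟨by linarith [pi_pos], hA2⟩
  rw [mul_assoc (h ^ 2 / R ^ 2) x, cot_add_arctan_div A h hx.ne']
  exact (hasDerivAt_antiderivativeI1Plus (x := x) hs.ne' (by positivity)).const_mul (h ^ 2 / R ^ 2)

theorem antiderivative_I1_plus (h R A : ℝ) (hh : 0 < h) (hR : 0 < R)
    (hA : A ∈ Set.Ioo 0 (π / 2)) :
    ∀ x : ℝ, 0 < x →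
      HasDerivAt
        (fun x : ℝ => (h ^ 2 / R ^ 2) *
          ((1 / 2) * (Real.cot A) ^ 2 * x ^ 2
            - h * (1 / Real.sin A) ^ 4 * Real.sin (2 * A) * x
            + h ^ 3 * (1 / Real.sin A) ^ 6 * Real.sin (2 * A) / (2 * (x + h * Real.cot A))
            + h ^ 2 * (2 + Real.cos (2 * A)) * (1 / Real.sin A) ^ 4 *
                Real.log (h * Real.cos A + x * Real.sin A)))
        ((h ^ 2 / R ^ 2) * x * (Real.cot (A + Real.arctan (h / x))) ^ 2) x :=
  antiderivative_I1_plus_general h R A hh hA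
end

section
/- Let ℏ > 0, R > 0 and A ∈ (0, π/2). Define F on the interval (0, ℏ cot A) by F(x) = (ℏ²/R²)·[ (1/2)·cot²(A)·x² + ℏ·csc⁴(A)·sin(2A)·x − ℏ³·csc⁶(A)·sin(2A)/(2(x − ℏ cot A)) + ℏ²·(2 + cos(2A))·csc⁴(A)·ln(ℏ cos A − x sin A) ]. Then for every x ∈ (0, ℏ cot A), F is differentiable at x with F′(x) = (ℏ²/R²) · x · cot²(A − arctan(ℏ/x)). -/
/-!
Writing `s = sin A`, `c = cos A`, the subtraction formula together with
`cos (arctan t) = 1 / √(1 + t²)` and `sin (arctan t) = t / √(1 + t²)` turns the integrand into the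
rational function `x ((x c + h s) / (x s - h c))²`, of which `F` is the partial-fraction
antiderivative. Differentiating `F` term by term gives a rational function that agrees with the
integrand modulo `s² + c² = 1`.
-/

open Real

theorem cot_sub_arctan_div {A h x : ℝ} (hx : x ≠ 0) :
    cot (A - arctan (h / x)) = (x * cos A + h * sin A) / (x * sin A - h * cos A) := by
  have : 0 < √(1 + (h / x) ^ 2) := by positivity
  rw [cot_eq_cos_div_sin, cos_sub, sin_sub, cos_arctan, sin_arctan]
  field_simp

/-- `F` with `cot A`, `sin 2A`, `cos 2A` written as `c / s`, `2 s c`, `2 c² - 1`. -/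
theorem hasDerivAt_I1_antiderivative {s c h x : ℝ} (hsc : s ^ 2 + c ^ 2 = 1) (hs : s ≠ 0)
    (hpole : x * s - h * c ≠ 0) :
    HasDerivAt (fun x => (1 / 2) * (c / s) ^ 2 * x ^ 2 + h * (1 / s) ^ 4 * (2 * s * c) * x
        - h ^ 3 * (1 / s) ^ 6 * (2 * s * c) / (2 * (x - h * (c / s)))
        + h ^ 2 * (2 + (2 * c ^ 2 - 1)) * (1 / s) ^ 4 * log (h * c - x * s))
      (x * ((x * c + h * s) / (x * s - h * c)) ^ 2) x := by
  have hshift : x - h * (c / s) = (x * s - h * c) / s := by field_simp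
  have hlog : h * c - x * s = -(x * s - h * c) := by ring
  have hquad := ((hasDerivAt_id x).pow 2).const_mul ((1 / 2) * (c / s) ^ 2)
  have hlin := (hasDerivAt_id x).const_mul (h * (1 / s) ^ 4 * (2 * s * c))
  have hrecip := (hasDerivAt_const x (h ^ 3 * (1 / s) ^ 6 * (2 * s * c))).div
    (((hasDerivAt_id x).sub_const (h * (c / s))).const_mul 2)
    (mul_ne_zero two_ne_zero (hshift ▸ div_ne_zero hpole hs))
  have hlogt := ((((hasDerivAt_id x).mul_const s).const_sub (h * c)).log
    (hlog ▸ neg_ne_zero.2 hpole)).const_mul (h ^ 2 * (2 + (2 * c ^ 2 - 1)) * (1 / s) ^ 4)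
  refine (((hquad.add hlin).sub hrecip).add hlogt).congr_deriv ?_
  simp only [id, Nat.cast_ofNat, Nat.add_one_sub_one, pow_one, mul_one, one_mul, zero_mul,
    zero_sub]
  rw [hlog, hshift]
  have : s * x - c * h ≠ 0 := by rwa [mul_comm s, mul_comm c]
  field_simp
  linear_combination s * h * x * (h * (c ^ 2 - s ^ 2 - 1) - 2 * s * c * x) * hsc

theorem antiderivative_I1_minus_general (h R A : ℝ) :
    ∀ x ∈ Set.Ioo (0 : ℝ) (h * Real.cot A),
      HasDerivAt
        (fun x : ℝ => (h ^ 2 / R ^ 2) *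
          ((1 / 2) * (Real.cot A) ^ 2 * x ^ 2
            + h * (1 / Real.sin A) ^ 4 * Real.sin (2 * A) * x
            - h ^ 3 * (1 / Real.sin A) ^ 6 * Real.sin (2 * A) / (2 * (x - h * Real.cot A))
            + h ^ 2 * (2 + Real.cos (2 * A)) * (1 / Real.sin A) ^ 4 *
                Real.log (h * Real.cos A - x * Real.sin A)))
        ((h ^ 2 / R ^ 2) * x * (Real.cot (A - Real.arctan (h / x))) ^ 2) x := by
  rintro x ⟨hx, hxA⟩
  rw [cot_eq_cos_div_sin] at hxA
  have hs : sin A ≠ 0 := fun hs => by simp [hs] at hxA; linarith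
  have hpole : x * sin A - h * cos A ≠ 0 := by
    rw [show x * sin A - h * cos A = (x - h * (cos A / sin A)) * sin A by field_simp]
    exact mul_ne_zero (sub_ne_zero.2 hxA.ne) hs
  rw [cot_sub_arctan_div hx.ne']
  simp only [cot_eq_cos_div_sin, sin_two_mul, cos_two_mul]
  exact ((hasDerivAt_I1_antiderivative (sin_sq_add_cos_sq A) hs hpole).const_mul _).congr_deriv
    (mul_assoc _ _ _).symm

theorem antiderivative_I1_minus (h R A : ℝ) (hh : 0 < h) (hR : 0 < R)
    (hA : A ∈ Set.Ioo 0 (π / 2)) :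
    ∀ x ∈ Set.Ioo (0 : ℝ) (h * Real.cot A),
      HasDerivAt
        (fun x : ℝ => (h ^ 2 / R ^ 2) *
          ((1 / 2) * (Real.cot A) ^ 2 * x ^ 2
            + h * (1 / Real.sin A) ^ 4 * Real.sin (2 * A) * x
            - h ^ 3 * (1 / Real.sin A) ^ 6 * Real.sin (2 * A) / (2 * (x - h * Real.cot A))
            + h ^ 2 * (2 + Real.cos (2 * A)) * (1 / Real.sin A) ^ 4 *
                Real.log (h * Real.cos A - x * Real.sin A)))
        ((h ^ 2 / R ^ 2) * x * (Real.cot (A - Real.arctan (h / x))) ^ 2) x :=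
  antiderivative_I1_minus_general h R A
end

section
/- Let ℏ > 0, R > 0, A ∈ (0, π/2), and set ψ̄ = arctan(ℏ/R). For every ψ satisfying ψ̄ + A ≤ ψ and ψ + A ≤ π/2, one has 0 ≤ (ℏ²/R²)·(cot²(ψ − A) − cot²(ψ + A)) ≤ 1. -/
open Real

namespace Real

lemma cot_arctan (x : ℝ) : cot (arctan x) = x⁻¹ := by
  rw [← inv_inv (cot _), cot_inv_eq_tan, tan_arctan]

lemma cot_nonneg {x : ℝ} (hx₀ : 0 < x) (hx : x ≤ π / 2) : 0 ≤ cot x := by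
  rw [cot_eq_cos_div_sin]
  exact div_nonneg (cos_nonneg_of_mem_Icc ⟨by linarith [pi_pos], hx⟩)
    (sin_nonneg_of_nonneg_of_le_pi hx₀.le (by linarith [pi_pos]))

-- With denominators cleared, `cot y ≤ cot x` says `0 ≤ sin y cos x - cos y sin x = sin (y - x)`.
lemma antitoneOn_cot : AntitoneOn cot (Set.Ioo 0 π) := by
  intro x ⟨hx₀, hxπ⟩ y ⟨hy₀, hyπ⟩ hxy
  rw [cot_eq_cos_div_sin, cot_eq_cos_div_sin,
    div_le_div_iff₀ (sin_pos_of_pos_of_lt_pi hy₀ hyπ) (sin_pos_of_pos_of_lt_pi hx₀ hxπ)]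
  have hsin : 0 ≤ sin (y - x) := sin_nonneg_of_nonneg_of_le_pi (by linarith) (by linarith)
  rw [sin_sub] at hsin
  linarith

end Real

theorem open_office_vertical_hitting_prob_le_one (h R A : ℝ) (hh : 0 < h) (hR : 0 < R)
    (hA : A ∈ Set.Ioo 0 (π / 2)) (ψ : ℝ)
    (hψl : Real.arctan (h / R) + A ≤ ψ) (hψu : ψ + A ≤ π / 2) :
    0 ≤ (h ^ 2 / R ^ 2) * ((Real.cot (ψ - A)) ^ 2 - (Real.cot (ψ + A)) ^ 2) ∧
      (h ^ 2 / R ^ 2) * ((Real.cot (ψ - A)) ^ 2 - (Real.cot (ψ + A)) ^ 2) ≤ 1 := by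
  have hA₀ : 0 < A := hA.1
  have harctan : 0 < arctan (h / R) := arctan_pos.2 (by positivity)
  have hπ := pi_pos
  have hcot_plus : 0 ≤ cot (ψ + A) := cot_nonneg (by linarith) hψu
  have hcot_plus_le : cot (ψ + A) ≤ cot (ψ - A) :=
    antitoneOn_cot ⟨by linarith, by linarith⟩ ⟨by linarith, by linarith⟩ (by linarith)
  have hcot_minus_le : cot (ψ - A) ≤ R / h := by
    rw [← inv_div, ← cot_arctan]
    exact antitoneOn_cot ⟨harctan, by linarith⟩ ⟨by linarith, by linarith⟩ (by linarith)
  refine ⟨mul_nonneg (by positivity) (sub_nonneg.2 (pow_le_pow_left₀ hcot_plus hcot_plus_le 2)), ?_⟩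
  calc (h ^ 2 / R ^ 2) * (cot (ψ - A) ^ 2 - cot (ψ + A) ^ 2)
      ≤ (h ^ 2 / R ^ 2) * (R / h) ^ 2 :=
        mul_le_mul_of_nonneg_left (by nlinarith) (by positivity)
    _ = 1 := by field_simp
end
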